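/- (Finite-temperature approximation of the Uncovered-Set score) Let P be a probabilistic tournament on n agents satisfying the margin assumption with margin δ > 0. For each agent a let u_0(a) := lim_{τ→0⁺} u_τ(a) (this limit exists). Then there exist constants C' > 0 and τ₀ > 0, depending on δ and n but not on τ, such that for all τ ∈ (0, τ₀) and all agents a: |u_τ(a) − u_0(a)| ≤ C' · τ. -/

import Mathlib

open Filter Topology

/-- The logistic sigmoid. -/
noncomputable def sigmoid (z : ℝ) : ℝ := 1 / (1 + Real.exp (-z))

/-- Soft majority edge matrix `D_τ`. -/
noncomputable def softEdge {n : ℕ} (P : Matrix (Fin n) (Fin n) ℝ) (τ : ℝ) :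
    Matrix (Fin n) (Fin n) ℝ := fun a b => sigmoid ((P a b - 1/2) / τ)

/-- 0/1 adjacency matrix of the hard majority tournament. -/
noncomputable def hardAdj {n : ℕ} (P : Matrix (Fin n) (Fin n) ℝ) : Matrix (Fin n) (Fin n) ℝ :=
  fun a b => if 1/2 < P a b then 1 else 0

/-- Soft reachability matrix `R_τ = Σ_{k=1}^K D_τ^k`. -/
noncomputable def softReach {n : ℕ} (P : Matrix (Fin n) (Fin n) ℝ) (τ : ℝ) (K : ℕ) :
    Matrix (Fin n) (Fin n) ℝ := ∑ k ∈ Finset.Icc 1 K, softEdge P τ ^ k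

/-- softmin over a finite family. -/
noncomputable def softmin {ι : Type*} (τ : ℝ) (s : Finset ι) (f : ι → ℝ) : ℝ :=
  -τ * Real.log (∑ i ∈ s, Real.exp (-(f i) / τ))

/-- scalar soft maximum over a finite family. -/
noncomputable def smax {ι : Type*} (τ : ℝ) (s : Finset ι) (f : ι → ℝ) : ℝ :=
  τ * Real.log (∑ i ∈ s, Real.exp (f i / τ))

/-- Soft Top-Cycle membership score `t_τ(a)`. -/
noncomputable def tcScore {n : ℕ} (P : Matrix (Fin n) (Fin n) ℝ) (τ : ℝ) (K : ℕ) (a : Fin n) : ℝ :=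
  softmin τ ({a}ᶜ : Finset (Fin n)) (fun b => softReach P τ K a b)

/-- Soft cover score `cover_τ(c, a)`. -/
noncomputable def coverScore {n : ℕ} (P : Matrix (Fin n) (Fin n) ℝ) (τ : ℝ) (c a : Fin n) : ℝ :=
  softEdge P τ c a *
    (1 - smax τ (Finset.univ : Finset (Fin n)) (fun b => softEdge P τ a b - softEdge P τ c b))

/-- Soft Uncovered-Set membership score `u_τ(a)`. -/
noncomputable def ucScore {n : ℕ} (P : Matrix (Fin n) (Fin n) ℝ) (τ : ℝ) (a : Fin n) : ℝ :=
  1 - smax τ ({a}ᶜ : Finset (Fin n)) (fun c => coverScore P τ c a)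

/-- `a ≻ b` in the hard majority tournament. -/
def beats {n : ℕ} (P : Matrix (Fin n) (Fin n) ℝ) (a b : Fin n) : Prop := 1/2 < P a b

/-- `a` reaches `b` via a directed path in the hard majority tournament. -/
def reaches {n : ℕ} (P : Matrix (Fin n) (Fin n) ℝ) : Fin n → Fin n → Prop :=
  Relation.TransGen (beats P)

/-- `c` covers `a` in the hard majority tournament. -/
def covers {n : ℕ} (P : Matrix (Fin n) (Fin n) ℝ) (c a : Fin n) : Prop :=
  beats P c a ∧ ∀ b, beats P a b → beats P c b

/-- membership in the Top Cycle of the hard majority tournament. -/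
def inTopCycle {n : ℕ} (P : Matrix (Fin n) (Fin n) ℝ) (a : Fin n) : Prop :=
  ∀ b, b ≠ a → reaches P a b

/-- membership in the Uncovered Set of the hard majority tournament. -/
def inUncovered {n : ℕ} (P : Matrix (Fin n) (Fin n) ℝ) (a : Fin n) : Prop :=
  ∀ c, c ≠ a → ¬ covers P c a

/-- `P` is a probabilistic tournament. -/
def IsProbTournament {n : ℕ} (P : Matrix (Fin n) (Fin n) ℝ) : Prop :=
  (∀ a b, 0 ≤ P a b ∧ P a b ≤ 1) ∧ (∀ a b, P a b + P b a = 1) ∧ ∀ a, P a a = 1/2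

/-- margin assumption with margin `δ`. -/
def HasMargin {n : ℕ} (P : Matrix (Fin n) (Fin n) ℝ) (δ : ℝ) : Prop :=
  ∀ a b, a ≠ b → δ ≤ |P a b - 1/2|

/-
As `τ → 0⁺` the soft edge `σ((P a b - 1/2)/τ)` tends to `1`, `0` or (on the diagonal) `1/2`, with
error at most `exp(-δ/τ) ≤ τ/δ` thanks to the margin. A soft maximum over `s` lies between the
maximum and the maximum plus `τ log #s`, and the maximum is 1-Lipschitz for the sup norm, so each
of the two nested soft maxima (in `cover_τ`, then in `u_τ`) costs only `O(τ)`: the edge error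
propagates to `4τ/δ + τ log n` for `cover_τ` and to `4τ/δ + 2τ log n` for `u_τ`. This bound holds
for every `τ > 0`, and it also yields the limit `u₀`.
-/

open Finset

lemma sigmoid_eq_real_sigmoid (z : ℝ) : sigmoid z = Real.sigmoid z := one_div _

lemma Real.sigmoid_le_exp (z : ℝ) : Real.sigmoid z ≤ Real.exp z :=
  calc Real.sigmoid z ≤ (Real.exp (-z))⁻¹ :=
        inv_anti₀ (Real.exp_pos _) (le_add_of_nonneg_left zero_le_one)
    _ = Real.exp z := by rw [Real.exp_neg, inv_inv]

lemma Real.abs_sigmoid_div_sub_le (x τ : ℝ) :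
    |Real.sigmoid (x / τ) - (1 + Real.sign x) / 2| ≤ Real.exp (-(|x| / τ)) := by
  rcases lt_trichotomy x 0 with hx | rfl | hx
  · have h1 := Real.sigmoid_le_exp (x / τ)
    have h2 := Real.sigmoid_pos (x / τ)
    rw [Real.sign_of_neg hx, abs_of_neg hx, neg_div, neg_neg, abs_le]
    constructor <;> linarith
  · simp [Real.sigmoid_zero]
  · have h1 := Real.sigmoid_le_exp (-(x / τ))
    have h2 := Real.sigmoid_le_one (x / τ)
    rw [Real.sigmoid_neg] at h1
    rw [Real.sign_of_pos hx, abs_of_pos hx, abs_le]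
    constructor <;> linarith

lemma exp_neg_div_le_div {δ τ : ℝ} (hδ : 0 < δ) (hτ : 0 < τ) :
    Real.exp (-(δ / τ)) ≤ τ / δ := by
  rw [Real.exp_neg, ← inv_div δ τ]
  exact inv_anti₀ (div_pos hδ hτ) ((le_add_of_nonneg_right zero_le_one).trans
    (Real.add_one_le_exp _))

section smax

variable {ι : Type*} {τ : ℝ} {s : Finset ι}

lemma sup'_le_smax (hτ : 0 < τ) (hs : s.Nonempty) (f : ι → ℝ) : s.sup' hs f ≤ smax τ s f := by
  obtain ⟨i, hi, hfi⟩ := s.exists_mem_eq_sup' hs f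
  have hsum : Real.exp (f i / τ) ≤ ∑ j ∈ s, Real.exp (f j / τ) :=
    single_le_sum (f := fun j => Real.exp (f j / τ)) (fun j _ => (Real.exp_pos _).le) hi
  rw [hfi, smax, ← div_le_iff₀' hτ, ← Real.log_exp (f i / τ)]
  exact Real.log_le_log (Real.exp_pos _) hsum

lemma smax_le_sup'_add (hτ : 0 < τ) (hs : s.Nonempty) (f : ι → ℝ) :
    smax τ s f ≤ s.sup' hs f + τ * Real.log #s := by
  have hsum : ∑ j ∈ s, Real.exp (f j / τ) ≤ #s * Real.exp (s.sup' hs f / τ) := by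
    rw [← nsmul_eq_mul]
    exact sum_le_card_nsmul _ _ _ fun j hj =>
      Real.exp_le_exp.mpr (div_le_div_of_nonneg_right (le_sup' f hj) hτ.le)
  have hlog := Real.log_le_log (sum_pos (fun j _ => Real.exp_pos _) hs) hsum
  rw [Real.log_mul (by exact_mod_cast hs.card_pos.ne') (Real.exp_ne_zero _), Real.log_exp] at hlog
  calc smax τ s f ≤ τ * (Real.log #s + s.sup' hs f / τ) := mul_le_mul_of_nonneg_left hlog hτ.le
    _ = s.sup' hs f + τ * Real.log #s := by field_simp; ring

lemma abs_sup'_sub_sup'_le (hs : s.Nonempty) {f g : ι → ℝ} {ε : ℝ}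
    (h : ∀ i ∈ s, |f i - g i| ≤ ε) : |s.sup' hs f - s.sup' hs g| ≤ ε := by
  rw [abs_sub_le_iff, sub_le_iff_le_add, sub_le_iff_le_add]
  constructor <;> refine sup'_le _ _ fun i hi => ?_
  · exact le_add_of_le_add_left (sub_le_iff_le_add.mp (abs_sub_le_iff.mp (h i hi)).1)
      (le_sup' g hi)
  · exact le_add_of_le_add_left (sub_le_iff_le_add.mp (abs_sub_le_iff.mp (h i hi)).2)
      (le_sup' f hi)

lemma abs_smax_sub_sup'_le (hτ : 0 < τ) (hs : s.Nonempty) {f g : ι → ℝ} {ε : ℝ}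
    (h : ∀ i ∈ s, |f i - g i| ≤ ε) : |smax τ s f - s.sup' hs g| ≤ ε + τ * Real.log #s := by
  have hlow := sup'_le_smax hτ hs f
  have hupp := smax_le_sup'_add hτ hs f
  have hsup := abs_sup'_sub_sup'_le hs h
  have hlog : 0 ≤ τ * Real.log #s := mul_nonneg hτ.le (Real.log_natCast_nonneg _)
  rw [abs_le] at hsup ⊢
  constructor <;> linarith [hsup.1, hsup.2]

end smax

lemma tendsto_nhdsGT_of_abs_sub_le_mul {f : ℝ → ℝ} {L C : ℝ}
    (h : ∀ τ, 0 < τ → |f τ - L| ≤ C * τ) : Tendsto f (𝓝[>] 0) (𝓝 L) := by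
  rw [tendsto_iff_dist_tendsto_zero]
  have hC : Tendsto (fun τ : ℝ => C * τ) (𝓝[>] 0) (𝓝 0) :=
    tendsto_nhdsWithin_of_tendsto_nhds (by simpa using (continuous_const_mul C).tendsto 0)
  exact squeeze_zero' (.of_forall fun _ => dist_nonneg)
    (eventually_nhdsWithin_of_forall fun τ hτ => h τ hτ) hC

section zeroTemperature

variable {n : ℕ} {P : Matrix (Fin n) (Fin n) ℝ} {τ ε : ℝ}

/-- The entrywise limit of `softEdge P τ` as `τ → 0⁺`; unlike `hardAdj P` it is `1/2` on the
diagonal. -/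
noncomputable def zeroTempEdge (P : Matrix (Fin n) (Fin n) ℝ) : Matrix (Fin n) (Fin n) ℝ :=
  fun a b => (1 + Real.sign (P a b - 1/2)) / 2

lemma zeroTempEdge_mem_Icc (a b : Fin n) : zeroTempEdge P a b ∈ Set.Icc 0 1 := by
  rcases Real.sign_apply_eq (P a b - 1/2) with h | h | h <;> norm_num [zeroTempEdge, h]

lemma softEdge_mem_Icc (a b : Fin n) : softEdge P τ a b ∈ Set.Icc 0 1 := by
  rw [softEdge, sigmoid_eq_real_sigmoid]
  exact ⟨Real.sigmoid_nonneg _, Real.sigmoid_le_one _⟩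

lemma abs_softEdge_sub_zeroTempEdge_le {δ : ℝ} (hδ : 0 < δ) (hτ : 0 < τ)
    (hdiag : ∀ a, P a a = 1/2) (hm : HasMargin P δ) (a b : Fin n) :
    |softEdge P τ a b - zeroTempEdge P a b| ≤ τ / δ := by
  simp only [softEdge, zeroTempEdge, sigmoid_eq_real_sigmoid]
  by_cases hab : a = b
  · subst hab
    simp only [hdiag, sub_self, zero_div, Real.sigmoid_zero, Real.sign_zero]
    norm_num
    positivity
  · calc _ ≤ Real.exp (-(|P a b - 1/2| / τ)) := Real.abs_sigmoid_div_sub_le _ _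
      _ ≤ Real.exp (-(δ / τ)) := by gcongr; exact hm a b hab
      _ ≤ τ / δ := exp_neg_div_le_div hδ hτ

noncomputable def zeroTempCover (P : Matrix (Fin n) (Fin n) ℝ) (c a : Fin n) : ℝ :=
  zeroTempEdge P c a *
    (1 - univ.sup' ⟨a, mem_univ a⟩ fun b => zeroTempEdge P a b - zeroTempEdge P c b)

lemma abs_coverScore_sub_zeroTempCover_le (hτ : 0 < τ)
    (hE : ∀ a b, |softEdge P τ a b - zeroTempEdge P a b| ≤ ε) (c a : Fin n) :
    |coverScore P τ c a - zeroTempCover P c a| ≤ 4 * ε + τ * Real.log n := by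
  set S := smax τ univ fun b => softEdge P τ a b - softEdge P τ c b
  set S₀ := univ.sup' ⟨a, mem_univ a⟩ fun b => zeroTempEdge P a b - zeroTempEdge P c b
  have hS : |S - S₀| ≤ 2 * ε + τ * Real.log #(univ : Finset (Fin n)) :=
    abs_smax_sub_sup'_le hτ _ fun b _ => by
      rw [sub_sub_sub_comm, two_mul]
      exact (abs_sub _ _).trans (add_le_add (hE a b) (hE c b))
  rw [card_univ, Fintype.card_fin, abs_sub_comm] at hS
  have hdiff (b : Fin n) : |zeroTempEdge P a b - zeroTempEdge P c b| ≤ 1 :=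
    abs_sub_le_of_nonneg_of_le (zeroTempEdge_mem_Icc a b).1 (zeroTempEdge_mem_Icc a b).2
      (zeroTempEdge_mem_Icc c b).1 (zeroTempEdge_mem_Icc c b).2
  have hS₀ : |1 - S₀| ≤ 2 := by
    have hle : S₀ ≤ 1 := sup'_le _ _ fun b _ => (le_abs_self _).trans (hdiff b)
    have hge : -1 ≤ S₀ := (neg_le_of_abs_le (hdiff a)).trans
      (le_sup' (fun b => zeroTempEdge P a b - zeroTempEdge P c b) (mem_univ a))
    exact abs_le.mpr ⟨by linarith, by linarith⟩
  have hEca : |softEdge P τ c a| ≤ 1 := by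
    obtain ⟨h0, h1⟩ := softEdge_mem_Icc (P := P) (τ := τ) c a
    exact abs_le.mpr ⟨by linarith, h1⟩
  have hε : 0 ≤ ε := (abs_nonneg _).trans (hE a a)
  calc |coverScore P τ c a - zeroTempCover P c a|
      = |softEdge P τ c a * (S₀ - S) + (softEdge P τ c a - zeroTempEdge P c a) * (1 - S₀)| := by
        simp only [coverScore, zeroTempCover, S, S₀]; ring_nf
    _ ≤ 1 * (2 * ε + τ * Real.log n) + ε * 2 := by
        refine (abs_add_le _ _).trans (add_le_add ?_ ?_) <;> rw [abs_mul]
        · exact mul_le_mul hEca hS (abs_nonneg _) zero_le_one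
        · exact mul_le_mul (hE c a) hS₀ (abs_nonneg _) hε
    _ = 4 * ε + τ * Real.log n := by ring

noncomputable def zeroTempUcScore (P : Matrix (Fin n) (Fin n) ℝ) (a : Fin n)
    (ha : ({a}ᶜ : Finset (Fin n)).Nonempty) : ℝ :=
  1 - ({a}ᶜ : Finset (Fin n)).sup' ha fun c => zeroTempCover P c a

lemma abs_ucScore_sub_zeroTempUcScore_le (hτ : 0 < τ)
    (hE : ∀ a b, |softEdge P τ a b - zeroTempEdge P a b| ≤ ε) (a : Fin n)
    (ha : ({a}ᶜ : Finset (Fin n)).Nonempty) :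
    |ucScore P τ a - zeroTempUcScore P a ha| ≤ 4 * ε + 2 * τ * Real.log n := by
  have h := abs_smax_sub_sup'_le hτ ha fun c _ => abs_coverScore_sub_zeroTempCover_le hτ hE c a
  have hcard : Real.log #({a}ᶜ : Finset (Fin n)) ≤ Real.log n := by
    refine Real.log_le_log (by exact_mod_cast ha.card_pos) ?_
    exact_mod_cast (card_le_univ _).trans_eq (Fintype.card_fin n)
  rw [ucScore, zeroTempUcScore, sub_sub_sub_cancel_left, abs_sub_comm]
  linarith [mul_le_mul_of_nonneg_left hcard hτ.le]

end zeroTemperature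

/-- finite-temperature approximation of the soft Uncovered-Set score:
the zero-temperature limit `u₀` exists and `|u_τ(a) − u₀(a)| ≤ C'·τ` for small `τ`. -/
theorem ucScore_finite_temperature_bound {n : ℕ} (hn : 2 ≤ n)
    (P : Matrix (Fin n) (Fin n) ℝ) (δ : ℝ) (hδ : 0 < δ)
    (hP : IsProbTournament P) (hmargin : HasMargin P δ) :
    ∃ u0 : Fin n → ℝ,
      (∀ a, Tendsto (fun τ : ℝ => ucScore P τ a) (𝓝[>] (0:ℝ)) (𝓝 (u0 a))) ∧
      ∃ C' : ℝ, 0 < C' ∧ ∃ τ₀ : ℝ, 0 < τ₀ ∧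
        ∀ τ : ℝ, 0 < τ → τ < τ₀ → ∀ a, |ucScore P τ a - u0 a| ≤ C' * τ := by
  have hcompl (a : Fin n) : ({a}ᶜ : Finset (Fin n)).Nonempty := by
    obtain ⟨b, hb⟩ := Fintype.exists_ne_of_one_lt_card (by rw [Fintype.card_fin]; omega) a
    exact ⟨b, by simpa using hb⟩
  have hbound (τ : ℝ) (hτ : 0 < τ) (a : Fin n) :
      |ucScore P τ a - zeroTempUcScore P a (hcompl a)| ≤ (4 / δ + 2 * Real.log n) * τ := by
    have hE := abs_softEdge_sub_zeroTempEdge_le hδ hτ hP.2.2 hmargin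
    calc _ ≤ 4 * (τ / δ) + 2 * τ * Real.log n := abs_ucScore_sub_zeroTempUcScore_le hτ hE a _
      _ = (4 / δ + 2 * Real.log n) * τ := by ring
  refine ⟨fun a => zeroTempUcScore P a (hcompl a),
    fun a => tendsto_nhdsGT_of_abs_sub_le_mul fun τ hτ => hbound τ hτ a,
    4 / δ + 2 * Real.log n, by positivity, 1, one_pos, fun τ hτ _ => hbound τ hτ⟩
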